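/- arXiv:1905.06003 — 2 statements merged into one kernel-verified Lean document; each statement's English description precedes it below -/
import Mathlib

section
/- For all non-negative integers n and m and every real number t, H_{n,m}(t) ≤ 1. -/
open MeasureTheory Filter

/-- `Ib n m = Σ_{z=0}^{n} ((1 + (-1)^{n-z}) / 2^m) · m!/(z!(m-z)!)`, empty sum for `n < 0`. -/
noncomputable def Ib (n : ℤ) (m : ℕ) : ℝ :=
  ∑ z ∈ Finset.range (n + 1).toNat,
    ((1 + (-1 : ℝ) ^ (n.toNat - z)) / 2 ^ m) * (m.choose z)

/-- The function `G(x, y, m)` of the paper. -/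
noncomputable def Gfun (x y m : ℕ) : ℝ :=
  if x = 0 ∧ y = 0 then 1 else
    ∑ n ∈ Finset.range (m / (2 * (x + y)) + 1),
      (2 * Ib (((m : ℤ) - x) / 2 - ((x : ℤ) + y) * n) (2 * (((m : ℤ) - x) / 2) + x + 2).toNat
       - 2 * Ib (((m : ℤ) - x) / 2 - y - ((x : ℤ) + y) * n) (2 * (((m : ℤ) - x) / 2) + x + 2).toNat
       + 2 * Ib (((m : ℤ) - y) / 2 - ((x : ℤ) + y) * n) (2 * (((m : ℤ) - y) / 2) + y + 2).toNat
       - 2 * Ib (((m : ℤ) - y) / 2 - x - ((x : ℤ) + y) * n) (2 * (((m : ℤ) - y) / 2) + y + 2).toNat)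

/-- The piecewise-linear interpolation `H_{n,m}(t)` of the paper. -/
noncomputable def Hfun (n m : ℕ) (t : ℝ) : ℝ :=
  if (n : ℝ) ≤ |t| then 1 else
    (1 - ((n : ℝ) + t) / 2 + (⌊((n : ℝ) + t) / 2⌋ : ℤ))
        * Gfun (⌊((n : ℝ) + t) / 2⌋).toNat (n - (⌊((n : ℝ) + t) / 2⌋).toNat) m
    + (((n : ℝ) + t) / 2 - (⌊((n : ℝ) + t) / 2⌋ : ℤ))
        * Gfun ((⌊((n : ℝ) + t) / 2⌋).toNat + 1) (n - (⌊((n : ℝ) + t) / 2⌋).toNat - 1) m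

open Finset
def Psi (m : ℕ) (u : ℤ) : ℕ :=
  ∑ w ∈ range (m+1), m.choose w * ((if (2*w : ℤ) < u then 1 else 0) + (if (2*w : ℤ) ≤ u then 1 else 0))

lemma Psi_neg {m : ℕ} {u : ℤ} (h : u < 0) : Psi m u = 0 := by
  apply Finset.sum_eq_zero
  intro w _
  have h1 : ¬ ((2*(w:ℤ)) < u) := by omega
  have h2 : ¬ ((2*(w:ℤ)) ≤ u) := by omega
  simp [h1, h2]

lemma Psi_mono (m : ℕ) {u v : ℤ} (h : u ≤ v) : Psi m u ≤ Psi m v := by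
  apply Finset.sum_le_sum
  intro w _
  have : ((if (2*w : ℤ) < u then 1 else 0) + (if (2*w : ℤ) ≤ u then 1 else 0)) ≤ ((if (2*w : ℤ) < v then 1 else 0) + (if (2*w : ℤ) ≤ v then 1 else 0)) := by
    split_ifs <;> omega
  exact Nat.mul_le_mul_left _ this

lemma Psi_self (m : ℕ) : Psi m m = 2^m := by
  have h2 : Psi m m + Psi m m = 2^(m+1) := by
    nth_rewrite 1 [Psi, ← Finset.sum_range_reflect]
    rw [Psi, ← Finset.sum_add_distrib]
    have key : ∀ w ∈ range (m+1), m.choose (m + 1 - 1 - w) * ((if (2*((m + 1 - 1 - w : ℕ)) : ℤ) < m then 1 else 0) + (if (2*((m + 1 - 1 - w : ℕ)):ℤ) ≤ m then 1 else 0)) + m.choose w * ((if (2*w:ℤ) < m then 1 else 0) + (if (2*w:ℤ) ≤ m then 1 else 0)) = 2 * m.choose w := by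
      intro w hw
      rw [Finset.mem_range] at hw
      have hw' : w ≤ m := by omega
      have hs : m + 1 - 1 - w = m - w := by omega
      rw [hs, Nat.choose_symm hw']
      have hc : ((m - w : ℕ) : ℤ) = (m : ℤ) - w := by omega
      rw [hc, ← Nat.mul_add]
      have : ((if (2*((m:ℤ) - w)) < m then 1 else 0) + (if (2*((m:ℤ)-w)) ≤ m then 1 else 0)) + ((if (2*(w:ℤ)) < m then 1 else 0) + (if (2*(w:ℤ)) ≤ m then 1 else 0)) = 2 := by
        split_ifs <;> omega
      rw [this, Nat.mul_comm]
    rw [Finset.sum_congr rfl key, ← Finset.mul_sum, Nat.sum_range_choose]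
    ring
  omega

lemma Psi_succ (m : ℕ) (u : ℤ) : Psi (m+1) u = Psi m u + Psi m (u-2) := by
  have g0 : ∀ u : ℤ, Psi m (u-2) = ∑ w ∈ range (m+1), m.choose w * ((if (2*(w+1) : ℤ) < u then 1 else 0) + (if (2*(w+1) : ℤ) ≤ u then 1 else 0)) := by
    intro u
    apply Finset.sum_congr rfl
    intro w _
    congr 2 <;> (apply if_congr _ rfl rfl; constructor <;> intro <;> omega)
  rw [Psi, Finset.sum_range_succ']
  push_cast
  have step : ∀ w, (m+1).choose (w+1) = m.choose w + m.choose (w+1) := fun w => Nat.choose_succ_succ m w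
  have : ∑ w ∈ range (m+1), (m+1).choose (w+1) * ((if (2*(w+1) : ℤ) < u then 1 else 0) + (if (2*(w+1) : ℤ) ≤ u then 1 else 0))
      = ∑ w ∈ range (m+1), m.choose w * ((if (2*(w+1) : ℤ) < u then 1 else 0) + (if (2*(w+1) : ℤ) ≤ u then 1 else 0))
      + ∑ w ∈ range (m+1), m.choose (w+1) * ((if (2*(w+1) : ℤ) < u then 1 else 0) + (if (2*(w+1) : ℤ) ≤ u then 1 else 0)) := by
    rw [← Finset.sum_add_distrib]
    apply Finset.sum_congr rfl
    intro w _
    rw [step w]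
    ring
  rw [this]
  have h3 : Psi m u = ∑ w ∈ range (m+1), m.choose (w+1) * ((if (2*(w+1) : ℤ) < u then 1 else 0) + (if (2*(w+1) : ℤ) ≤ u then 1 else 0)) + (m+1).choose 0 * ((if (0 : ℤ) < u then 1 else 0) + (if (0 : ℤ) ≤ u then 1 else 0)) := by
    rw [Psi, Finset.sum_range_succ']
    have : m.choose (m+1) = 0 := Nat.choose_succ_self m
    rw [Finset.sum_range_succ]
    simp [this]
  rw [← g0]
  omega

lemma sum_trunc (m a : ℕ) (f : ℕ → ℕ) (hf : ∀ w, m < w → f w = 0) :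
    ∑ w ∈ range (m+1), (if w ≤ a then f w else 0) = ∑ w ∈ range (a+1), f w := by
  rcases le_total a m with h | h
  · rw [← Finset.sum_subset (Finset.range_subset_range.2 (by omega : a+1 ≤ m+1))]
    · apply Finset.sum_congr rfl
      intro w hw
      rw [Finset.mem_range] at hw
      rw [if_pos (by omega)]
    · intro w hw hw2
      rw [Finset.mem_range] at hw
      rw [Finset.mem_range] at hw2
      rw [if_neg (by omega)]
  · rw [← Finset.sum_subset (Finset.range_subset_range.2 (by omega : m+1 ≤ a+1))]
    · apply Finset.sum_congr rfl
      intro w hw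
      rw [Finset.mem_range] at hw
      rw [if_pos (by omega)]
    · intro w hw hw2
      rw [Finset.mem_range] at hw2
      exact hf w (by omega)

lemma Psi_even (m a : ℕ) : Psi m (2*a) = ∑ w ∈ range (a+1), (m+1).choose w := by
  induction a with
  | zero =>
    rw [Psi]
    simp only [Nat.cast_zero, mul_zero]
    rw [Finset.sum_range_succ']
    simp
    intro x _
    right
    positivity
  | succ a ih =>
    have key : Psi m (2*((a:ℤ)+1)) = Psi m (2*a) + (m.choose a + m.choose (a+1)) := by
      rw [Psi, Psi]
      have e1 : ∀ w ∈ range (m+1), m.choose w * ((if (2*w : ℤ) < 2*((a:ℤ)+1) then 1 else 0) + (if (2*w : ℤ) ≤ 2*((a:ℤ)+1) then 1 else 0)) = m.choose w * ((if (2*w : ℤ) < 2*a then 1 else 0) + (if (2*w : ℤ) ≤ 2*a then 1 else 0)) + ((if w = a then m.choose a else 0) + (if w = a+1 then m.choose (a+1) else 0)) := by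
        intro w _
        split_ifs <;> simp_all <;> omega
      rw [Finset.sum_congr rfl e1, Finset.sum_add_distrib, Finset.sum_add_distrib,
        Finset.sum_ite_eq' (range (m+1)), Finset.sum_ite_eq' (range (m+1))]
      have hz : ∀ b : ℕ, (if b ∈ range (m+1) then m.choose b else 0) = m.choose b := by
        intro b
        split_ifs with h
        · rfl
        · rw [Finset.mem_range] at h
          rw [Nat.choose_eq_zero_of_lt (by omega)]
      rw [hz, hz]
    have hc : ((a+1:ℕ):ℤ) = (a:ℤ)+1 := by push_cast; ring
    rw [hc, key, ih, Finset.sum_range_succ _ (a+1)]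
    have hp := Nat.choose_succ_succ m a
    simp only [Nat.succ_eq_add_one] at hp
    omega

lemma Psi_odd (m a : ℕ) : Psi m (2*a+1) = 2 * ∑ w ∈ range (a+1), m.choose w := by
  have h1 : Psi m (2*(a:ℤ)+1) = ∑ w ∈ range (m+1), m.choose w * ((if w ≤ a then 1 else 0) + (if w ≤ a then 1 else 0)) := by
    apply Finset.sum_congr rfl
    intro w _
    congr 2 <;> (apply if_congr _ rfl rfl; constructor <;> intro <;> omega)
  rw [h1]
  have h2 : ∀ w ∈ range (m+1), m.choose w * ((if w ≤ a then 1 else 0) + (if w ≤ a then 1 else 0)) = 2 * (if w ≤ a then m.choose w else 0) := by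
    intro w _; split_ifs <;> ring
  rw [Finset.sum_congr rfl h2, ← Finset.mul_sum,
    sum_trunc m a _ (fun w hw => Nat.choose_eq_zero_of_lt hw)]

lemma Psi_pred (m : ℕ) : Psi m ((m:ℤ)-1) + 1 ≤ 2^m := by
  have h := Psi_self m
  have hlt : Psi m ((m:ℤ)-1) < Psi m m := by
    apply Finset.sum_lt_sum
    · intro w _
      apply Nat.mul_le_mul_left
      gcongr <;> (split_ifs <;> omega)
    · refine ⟨m/2, Finset.mem_range.2 (by omega), ?_⟩
      have hpos := Nat.choose_pos (show m/2 ≤ m by omega)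
      have hind : ((if (2*((m/2:ℕ)) : ℤ) < (m:ℤ)-1 then 1 else 0) + (if (2*((m/2:ℕ)):ℤ) ≤ (m:ℤ)-1 then 1 else 0)) < ((if (2*((m/2:ℕ)):ℤ) < m then (1:ℕ) else 0) + (if (2*((m/2:ℕ)):ℤ) ≤ m then 1 else 0)) := by
        have hm : (2*((m/2:ℕ)) : ℤ) = m ∨ (2*((m/2:ℕ)) : ℤ) = (m:ℤ)-1 := by omega
        rcases hm with hm | hm <;> rw [hm] <;> split_ifs <;> omega
      exact mul_lt_mul_of_pos_left hind hpos
  omega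

def Gterm (m x y k : ℕ) : ℤ :=
  (Psi m ((m:ℤ) - x - 2*k*(x+y)) : ℤ) - (Psi m ((m:ℤ) - x - 2*y - 2*k*(x+y)) : ℤ)
  + (Psi m ((m:ℤ) - y - 2*k*(x+y)) : ℤ) - (Psi m ((m:ℤ) - y - 2*x - 2*k*(x+y)) : ℤ)

def Gam (x y m : ℕ) : ℤ := ∑ k ∈ range (m / (2*(x+y)) + 1), Gterm m x y k

lemma Gterm_zero {m x y k : ℕ} (h : (m:ℤ) < 2*k*(x+y)) : Gterm m x y k = 0 := by
  unfold Gterm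
  rw [Psi_neg (by omega), Psi_neg (by omega), Psi_neg (by omega), Psi_neg (by omega)]
  simp

lemma Gterm_succ (m x y k : ℕ) :
    Gterm (m+1) (x+1) (y+1) k = Gterm m x (y+2) k + Gterm m (x+2) y k := by
  unfold Gterm
  rw [Psi_succ, Psi_succ, Psi_succ, Psi_succ]
  push_cast
  ring_nf

lemma GamX0 (m y : ℕ) : Gam 0 y m ≤ 2^m := by
  have hc : ∀ k, Gterm m 0 y k = (Psi m ((m:ℤ) - 2*k*y) : ℤ) - (Psi m ((m:ℤ) - 2*((k+1:ℕ))*y) : ℤ) := by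
    intro k
    unfold Gterm
    have e1 : (m:ℤ) - (0:ℕ) - 2*k*((0:ℕ)+y) = (m:ℤ) - 2*k*y := by push_cast; ring
    have e2 : (m:ℤ) - (0:ℕ) - 2*y - 2*k*((0:ℕ)+y) = (m:ℤ) - 2*((k+1:ℕ):ℤ)*y := by push_cast; ring
    have e3 : (m:ℤ) - y - 2*(0:ℕ) - 2*k*((0:ℕ)+y) = (m:ℤ) - y - 2*k*((0:ℕ)+y) := by push_cast; ring
    rw [e1, e2, e3]
    ring
  rw [Gam, Finset.sum_congr rfl (fun k _ => hc k), Finset.sum_range_sub' (fun k => (Psi m ((m:ℤ) - 2*k*y) : ℤ))]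
  simp only [Nat.cast_zero, mul_zero, zero_mul, sub_zero]
  have h1 : (Psi m ((m:ℤ)) : ℤ) = 2^m := by exact_mod_cast Psi_self m
  have h2 : (0:ℤ) ≤ (Psi m ((m:ℤ) - 2*((m/(2*(0+y))+1 : ℕ))*y) : ℤ) := by positivity
  omega

lemma GamY0 (m x : ℕ) : Gam x 0 m ≤ 2^m := by
  have hc : ∀ k, Gterm m x 0 k = (Psi m ((m:ℤ) - 2*k*x) : ℤ) - (Psi m ((m:ℤ) - 2*((k+1:ℕ))*x) : ℤ) := by
    intro k
    unfold Gterm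
    have e1 : (m:ℤ) - (0:ℕ) - 2*k*(x+(0:ℕ)) = (m:ℤ) - 2*k*x := by push_cast; ring
    have e2 : (m:ℤ) - (0:ℕ) - 2*x - 2*k*(x+(0:ℕ)) = (m:ℤ) - 2*((k+1:ℕ):ℤ)*x := by push_cast; ring
    have e3 : (m:ℤ) - x - 2*(0:ℕ) - 2*k*(x+(0:ℕ)) = (m:ℤ) - x - 2*k*(x+(0:ℕ)) := by push_cast; ring
    rw [e1, e2, e3]
    ring
  rw [Gam, Finset.sum_congr rfl (fun k _ => hc k), Finset.sum_range_sub' (fun k => (Psi m ((m:ℤ) - 2*k*x) : ℤ))]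
  simp only [Nat.cast_zero, mul_zero, zero_mul, sub_zero]
  have h1 : (Psi m ((m:ℤ)) : ℤ) = 2^m := by exact_mod_cast Psi_self m
  have h2 : (0:ℤ) ≤ (Psi m ((m:ℤ) - 2*((m/(2*(x+0))+1 : ℕ))*x) : ℤ) := by positivity
  omega

lemma Gam_le (m x y : ℕ) (hxy : 1 ≤ x + y) : Gam x y m ≤ 2^m := by
  induction m generalizing x y with
  | zero =>
    rcases Nat.eq_zero_or_pos x with hx | hx
    · subst hx; exact GamX0 0 y
    rcases Nat.eq_zero_or_pos y with hy | hy
    · subst hy; exact GamY0 0 x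
    rw [Gam, Nat.zero_div, Finset.sum_range_one]
    unfold Gterm
    rw [Psi_neg (by push_cast; omega), Psi_neg (by push_cast; omega),
        Psi_neg (by push_cast; omega), Psi_neg (by push_cast; omega)]
    simp
  | succ m ih =>
    rcases Nat.eq_zero_or_pos x with hx | hx
    · subst hx; exact GamX0 (m+1) y
    rcases Nat.eq_zero_or_pos y with hy | hy
    · subst hy; exact GamY0 (m+1) x
    obtain ⟨a, rfl⟩ : ∃ a, x = a + 1 := ⟨x - 1, by omega⟩
    obtain ⟨b, rfl⟩ : ∃ b, y = b + 1 := ⟨y - 1, by omega⟩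
    set d : ℕ := (a+1)+(b+1) with hd
    have hK : m / (2*d) + 1 ≤ (m+1) / (2*d) + 1 := by
      have := Nat.div_le_div_right (c := 2*d) (Nat.le_succ m)
      simp only [Nat.succ_eq_add_one] at this
      omega
    have hzero : ∀ (x' y' : ℕ), x' + y' = d → ∀ k ∈ range ((m+1)/(2*d)+1),
        k ∉ range (m/(2*d)+1) → Gterm m x' y' k = 0 := by
      intro x' y' hxy' k hk1 hk2
      rw [Finset.mem_range] at hk1
      rw [Finset.mem_range] at hk2
      apply Gterm_zero
      have h1 : m / (2*d) + 1 ≤ k := by omega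
      have h2 : m < 2*d*(m/(2*d)) + 2*d := by
        have ha := Nat.div_add_mod m (2*d)
        have hb : m % (2*d) < 2*d := Nat.mod_lt _ (by omega)
        omega
      have h5 : (m/(2*d)+1)*(2*d) ≤ k*(2*d) := Nat.mul_le_mul_right _ h1
      have h4 : m < 2*k*(x'+y') := by
        calc m < 2*d*(m/(2*d)) + 2*d := h2
        _ = (m/(2*d)+1)*(2*d) := by ring
        _ ≤ k*(2*d) := h5
        _ = 2*k*(x'+y') := by rw [hxy']; ring
      exact_mod_cast h4
    have ext1 : Gam a (b+2) m = ∑ k ∈ range ((m+1)/(2*d)+1), Gterm m a (b+2) k := by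
      rw [Gam]
      have hde : a + (b+2) = d := by omega
      rw [hde]
      exact Finset.sum_subset (Finset.range_subset_range.2 hK) (hzero a (b+2) hde)
    have ext2 : Gam (a+2) b m = ∑ k ∈ range ((m+1)/(2*d)+1), Gterm m (a+2) b k := by
      rw [Gam]
      have hde : (a+2) + b = d := by omega
      rw [hde]
      exact Finset.sum_subset (Finset.range_subset_range.2 hK) (hzero (a+2) b hde)
    have main : Gam (a+1) (b+1) (m+1) = Gam a (b+2) m + Gam (a+2) b m := by
      rw [Gam, ext1, ext2, ← Finset.sum_add_distrib]
      exact Finset.sum_congr rfl (fun k _ => Gterm_succ m a b k)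
    rw [main]
    have i1 := ih a (b+2) (by omega)
    have i2 := ih (a+2) b (by omega)
    have : (2:ℤ)^(m+1) = 2^m + 2^m := by ring
    omega

lemma Ib_neg {a : ℤ} (M : ℕ) (h : a < 0) : Ib a M = 0 := by
  unfold Ib
  have : (a+1).toNat = 0 := by omega
  rw [this]
  simp

lemma pascal_partial (N a : ℕ) :
    ∑ z ∈ range (a+1), (N+1).choose z + N.choose a = 2 * ∑ z ∈ range (a+1), N.choose z := by
  induction a with
  | zero => simp
  | succ a ih =>
    rw [Finset.sum_range_succ, Finset.sum_range_succ (f := fun z => N.choose z)]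
    have h := Nat.choose_succ_succ N a
    simp only [Nat.succ_eq_add_one] at h
    omega

lemma psi_odd_even (N a : ℕ) : Psi N (2*a+1) = Psi N (2*a) + N.choose a := by
  rw [Psi_odd, Psi_even]
  have := pascal_partial N a
  omega

lemma altSum (N a : ℕ) :
    ∑ z ∈ range (a+1), (-1:ℝ)^(a-z) * ((N+1).choose z) = N.choose a := by
  induction a with
  | zero => simp
  | succ a ih =>
    rw [Finset.sum_range_succ]
    have e1 : ∀ z ∈ range (a+1), (-1:ℝ)^(a+1-z) * ((N+1).choose z) = -((-1:ℝ)^(a-z) * ((N+1).choose z)) := by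
      intro z hz
      rw [Finset.mem_range] at hz
      have : a+1-z = (a-z)+1 := by omega
      rw [this, pow_succ]
      ring
    rw [Finset.sum_congr rfl e1, Finset.sum_neg_distrib, ih]
    have h := Nat.choose_succ_succ N a
    simp only [Nat.succ_eq_add_one] at h
    rw [Nat.sub_self, pow_zero, h]
    push_cast
    ring

lemma Ib_eq (N a : ℕ) : Ib (a:ℤ) (N+1) = (Psi N (2*(a:ℤ)+1) : ℝ) / 2^(N+1) := by
  unfold Ib
  have h1 : ((a:ℤ)+1).toNat = a+1 := by omega
  have h2 : (a:ℤ).toNat = a := by omega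
  rw [h1, h2]
  have e1 : ∀ z ∈ range (a+1), ((1 + (-1:ℝ)^(a-z))/2^(N+1)) * ((N+1).choose z)
      = (((N+1).choose z : ℝ) + (-1:ℝ)^(a-z) * ((N+1).choose z)) / 2^(N+1) := by
    intro z _; ring
  rw [Finset.sum_congr rfl e1, ← Finset.sum_div, Finset.sum_add_distrib, altSum, psi_odd_even]
  have h4 : ∑ z ∈ range (a+1), ((N+1).choose z : ℝ) = ((Psi N (2*(a:ℤ)) : ℕ) : ℝ) := by
    rw [Psi_even]
    push_cast
    ring
  rw [h4]
  push_cast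
  ring

lemma psi_lift (m a : ℕ) : Psi (m+1) (2*(a:ℤ)+1) = 2 * Psi m (2*(a:ℤ)) := by
  rw [Psi_odd, Psi_even]

lemma twoIb_eq (m x : ℕ) (hx : x ≤ m) (j : ℤ) :
    2 * Ib (((m:ℤ)-x)/2 - j) ((2*(((m:ℤ)-x)/2)+x+2).toNat)
      = (Psi m ((m:ℤ) - x - 2*j) : ℝ) / 2^m := by
  set t : ℕ := m - x with ht
  have hdiv : ((m:ℤ)-x)/2 = ((t/2 : ℕ) : ℤ) := by omega
  have hM : (2*(((m:ℤ)-x)/2)+x+2).toNat = 2*(t/2)+x+2 := by omega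
  rw [hM, hdiv]
  rcases Nat.even_or_odd t with ⟨h, hh⟩ | ⟨h, hh⟩
  · -- t = 2h : even case, N = m+1
    have hht : t/2 = h := by omega
    have hMM : 2*(t/2)+x+2 = (m+1)+1 := by omega
    rw [hMM, hht]
    rcases le_or_gt j (h:ℤ) with hj | hj
    · set a' : ℕ := ((h:ℤ) - j).toNat with ha'
      have he : (h:ℤ) - j = (a' : ℤ) := by omega
      rw [he, Ib_eq (m+1) a']
      have harg : (m:ℤ) - x - 2*j = 2*(a':ℤ) := by omega
      rw [harg, psi_lift]
      push_cast
      ring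
    · rw [Ib_neg _ (by omega), Psi_neg (by omega)]
      simp
  · -- t = 2h+1 : odd case, N = m
    have hht : t/2 = h := by omega
    have hMM : 2*(t/2)+x+2 = m+1 := by omega
    rw [hMM, hht]
    rcases le_or_gt j (h:ℤ) with hj | hj
    · set a' : ℕ := ((h:ℤ) - j).toNat with ha'
      have he : (h:ℤ) - j = (a' : ℤ) := by omega
      rw [he, Ib_eq m a']
      have harg : (m:ℤ) - x - 2*j = 2*(a':ℤ)+1 := by omega
      rw [harg]
      push_cast
      ring
    · rw [Ib_neg _ (by omega), Psi_neg (by omega)]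
      simp

lemma Gfun_eq (x y m : ℕ) (h00 : ¬(x = 0 ∧ y = 0)) (hx : x ≤ m) (hy : y ≤ m) :
    Gfun x y m = (Gam x y m : ℝ) / 2^m := by
  rw [Gfun, if_neg h00, Gam]
  have hterm : ∀ n : ℕ,
      (2 * Ib (((m : ℤ) - x) / 2 - ((x : ℤ) + y) * n) (2 * (((m : ℤ) - x) / 2) + x + 2).toNat
       - 2 * Ib (((m : ℤ) - x) / 2 - y - ((x : ℤ) + y) * n) (2 * (((m : ℤ) - x) / 2) + x + 2).toNat
       + 2 * Ib (((m : ℤ) - y) / 2 - ((x : ℤ) + y) * n) (2 * (((m : ℤ) - y) / 2) + y + 2).toNat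
       - 2 * Ib (((m : ℤ) - y) / 2 - x - ((x : ℤ) + y) * n) (2 * (((m : ℤ) - y) / 2) + y + 2).toNat)
      = (Gterm m x y n : ℝ) / 2^m := by
    intro n
    have e2 : ((m:ℤ)-x)/2 - y - ((x:ℤ)+y)*n = ((m:ℤ)-x)/2 - ((y:ℤ) + ((x:ℤ)+y)*n) := by ring
    have e4 : ((m:ℤ)-y)/2 - x - ((x:ℤ)+y)*n = ((m:ℤ)-y)/2 - ((x:ℤ) + ((x:ℤ)+y)*n) := by ring
    rw [e2, e4, twoIb_eq m x hx, twoIb_eq m x hx, twoIb_eq m y hy, twoIb_eq m y hy]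
    unfold Gterm
    have a1 : (m:ℤ) - x - 2*(((x:ℤ)+y)*n) = (m:ℤ) - x - 2*n*(x+y) := by ring
    have a2 : (m:ℤ) - x - 2*((y:ℤ) + ((x:ℤ)+y)*n) = (m:ℤ) - x - 2*y - 2*n*(x+y) := by ring
    have a3 : (m:ℤ) - y - 2*(((x:ℤ)+y)*n) = (m:ℤ) - y - 2*n*(x+y) := by ring
    have a4 : (m:ℤ) - y - 2*((x:ℤ) + ((x:ℤ)+y)*n) = (m:ℤ) - y - 2*x - 2*n*(x+y) := by ring
    rw [a1, a2, a3, a4]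
    push_cast
    ring
  rw [Finset.sum_congr rfl (fun n _ => hterm n), ← Finset.sum_div]
  congr 1
  push_cast
  ring

lemma G_le_one (x y m : ℕ) : Gfun x y m ≤ 1 := by
  by_cases h00 : x = 0 ∧ y = 0
  · rw [Gfun, if_pos h00]
  have h2m : (0:ℝ) < 2^m := by positivity
  rcases le_or_gt x m with hx | hx
  · rcases le_or_gt y m with hy | hy
    · rw [Gfun_eq x y m h00 hx hy, div_le_one h2m]
      have := Gam_le m x y (by omega)
      calc (Gam x y m : ℝ) ≤ ((2^m : ℤ) : ℝ) := by exact_mod_cast this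
        _ = 2^m := by push_cast; ring
    · -- y > m : pair_y vanishes
      have hK : m / (2*(x+y)) = 0 := Nat.div_eq_of_lt (by omega)
      rw [Gfun, if_neg h00, hK, Finset.sum_range_one]
      simp only [Nat.cast_zero, mul_zero, sub_zero]
      have hqy : ((m:ℤ)-y)/2 < 0 := by omega
      rw [Ib_neg _ (show ((m:ℤ)-y)/2 < 0 by omega),
          Ib_neg _ (show ((m:ℤ)-y)/2 - x < 0 by omega)]
      have t1 := twoIb_eq m x hx 0
      rw [mul_zero, sub_zero, sub_zero] at t1
      have t2 := twoIb_eq m x hx (y:ℤ)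
      rw [t1, t2]
      have b1 : (Psi m ((m:ℤ)-x) : ℝ) / 2^m ≤ 1 := by
        rw [div_le_one h2m]
        have := Psi_mono m (show (m:ℤ)-x ≤ (m:ℤ) by omega)
        rw [Psi_self] at this
        exact_mod_cast this
      have b2 : (0:ℝ) ≤ (Psi m ((m:ℤ)-x-2*(y:ℤ)) : ℝ) / 2^m := by positivity
      linarith
  · -- x > m : pair_x vanishes
    have hK : m / (2*(x+y)) = 0 := Nat.div_eq_of_lt (by omega)
    rw [Gfun, if_neg h00, hK, Finset.sum_range_one]
    simp only [Nat.cast_zero, mul_zero, sub_zero]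
    have hqx : ((m:ℤ)-x)/2 < 0 := by omega
    rw [Ib_neg _ (show ((m:ℤ)-x)/2 < 0 by omega),
        Ib_neg _ (show ((m:ℤ)-x)/2 - y < 0 by omega)]
    rcases le_or_gt y m with hy | hy
    · have t1 := twoIb_eq m y hy 0
      rw [mul_zero, sub_zero, sub_zero] at t1
      have t2 := twoIb_eq m y hy (x:ℤ)
      rw [t1, t2]
      have b1 : (Psi m ((m:ℤ)-y) : ℝ) / 2^m ≤ 1 := by
        rw [div_le_one h2m]
        have := Psi_mono m (show (m:ℤ)-y ≤ (m:ℤ) by omega)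
        rw [Psi_self] at this
        exact_mod_cast this
      have b2 : (0:ℝ) ≤ (Psi m ((m:ℤ)-y-2*(x:ℤ)) : ℝ) / 2^m := by positivity
      linarith
    · have hqy : ((m:ℤ)-y)/2 < 0 := by omega
      rw [Ib_neg _ (show ((m:ℤ)-y)/2 < 0 by omega),
          Ib_neg _ (show ((m:ℤ)-y)/2 - x < 0 by omega)]
      norm_num

theorem H_le_one (n m : ℕ) (t : ℝ) : Hfun n m t ≤ 1 := by
  rw [Hfun]
  split_ifs with h
  · exact le_refl 1
  · have hf1 : ((⌊((n : ℝ) + t) / 2⌋ : ℤ) : ℝ) ≤ ((n : ℝ) + t) / 2 := Int.floor_le _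
    have hf2 : ((n : ℝ) + t) / 2 < (⌊((n : ℝ) + t) / 2⌋ : ℤ) + 1 := Int.lt_floor_add_one _
    have g1 := G_le_one (⌊((n : ℝ) + t) / 2⌋).toNat (n - (⌊((n : ℝ) + t) / 2⌋).toNat) m
    have g2 := G_le_one ((⌊((n : ℝ) + t) / 2⌋).toNat + 1) (n - (⌊((n : ℝ) + t) / 2⌋).toNat - 1) m
    have hc1 : (0:ℝ) ≤ 1 - ((n : ℝ) + t) / 2 + (⌊((n : ℝ) + t) / 2⌋ : ℤ) := by linarith
    have hc2 : (0:ℝ) ≤ ((n : ℝ) + t) / 2 - (⌊((n : ℝ) + t) / 2⌋ : ℤ) := by linarith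
    nlinarith [mul_le_mul_of_nonneg_left g1 hc1, mul_le_mul_of_nonneg_left g2 hc2]
end

section
/- For all integers n ≥ 1 and m ≥ 1 and every real number t with |t| ≤ n - 2, it holds that H_{n,m}(t) = (1/2)·(H_{n,m-1}(t-2) + H_{n,m-1}(t+2)). -/
open MeasureTheory Filter

lemma Ib_neg_s15 (n : ℤ) (m : ℕ) (h : n < 0) : Ib n m = 0 := by
  unfold Ib
  have : (n + 1).toNat = 0 := by omega
  simp [this]

lemma Ib_rec (n : ℤ) (M : ℕ) : Ib n (M + 1) = (Ib n M + Ib (n - 1) M) / 2 := by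
  rcases lt_or_ge n 0 with h | h
  · rw [Ib_neg_s15 n _ h, Ib_neg_s15 n _ h, Ib_neg_s15 (n-1) _ (by omega)]; ring
  obtain ⟨k, rfl⟩ := Int.eq_ofNat_of_zero_le h
  have hIb : ∀ (j M' : ℕ), Ib (j : ℤ) M' =
      ∑ z ∈ Finset.range (j + 1), ((1 + (-1 : ℝ) ^ (j - z)) / 2 ^ M') * (M'.choose z) := by
    intro j M'
    unfold Ib
    norm_num
  cases k with
  | zero =>
    rw [hIb, hIb, Ib_neg_s15 _ _ (by norm_num)]
    simp
    ring
  | succ j =>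
    have h1 : ((j : ℤ) + 1 - 1) = (j : ℤ) := by ring
    rw [hIb, hIb]
    push_cast
    rw [h1, hIb]
    rw [Finset.sum_range_succ' (fun z => ((1 + (-1 : ℝ) ^ (j + 1 - z)) / 2 ^ (M+1)) * ((M+1).choose z))]
    rw [Finset.sum_range_succ' (fun z => ((1 + (-1 : ℝ) ^ (j + 1 - z)) / 2 ^ M) * (M.choose z))]
    have key : ∀ i ∈ Finset.range (j+1),
        ((1 + (-1 : ℝ) ^ (j + 1 - (i+1))) / 2 ^ (M+1)) * ((M+1).choose (i+1))
        = ((1 + (-1 : ℝ) ^ (j - i)) / 2 ^ M) * (M.choose i) / 2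
          + ((1 + (-1 : ℝ) ^ (j + 1 - (i+1))) / 2 ^ M) * (M.choose (i+1)) / 2 := by
      intro i _
      rw [Nat.choose_succ_succ, Nat.succ_sub_succ]
      push_cast
      ring
    rw [Finset.sum_congr rfl key, Finset.sum_add_distrib]
    simp only [Nat.choose_zero_right, Nat.cast_one]
    rw [← Finset.sum_div, ← Finset.sum_div]
    ring

lemma Ib_pair (c a : ℤ) (x : ℕ) (ha : 0 ≤ a) :
    2 * Ib (c - a) (2*c + x + 2).toNat =
      Ib (c - a) (2*c + x + 1).toNat + Ib (c - a - 1) (2*c + x + 1).toNat := by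
  rcases le_or_gt 0 c with hc | hc
  · have h2 : (2*c + x + 2).toNat = (2*c + x + 1).toNat + 1 := by omega
    rw [h2, Ib_rec]; ring
  · rw [Ib_neg_s15 _ _ (by omega), Ib_neg_s15 _ _ (by omega), Ib_neg_s15 _ _ (by omega)]; ring

lemma alt_sum (M : ℕ) : ∀ k : ℕ, ∑ z ∈ Finset.range (k+1), (-1:ℝ)^(k+z) * ((M+1).choose z) = (M.choose k) := by
  intro k
  induction k with
  | zero => simp
  | succ k ih =>
    rw [Finset.sum_range_succ]
    have e : ∀ z ∈ Finset.range (k+1), (-1:ℝ)^(k+1+z) * ((M+1).choose z) = -((-1)^(k+z) * ((M+1).choose z)) := by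
      intro z _
      rw [show k+1+z = (k+z)+1 from by omega, pow_succ]
      ring
    rw [Finset.sum_congr rfl e, Finset.sum_neg_distrib, ih]
    have : (-1:ℝ)^(k+1+(k+1)) = 1 := by
      rw [show k+1+(k+1) = 2*(k+1) from by omega, pow_mul]; norm_num
    rw [this, Nat.choose_succ_succ (M) (k)]
    push_cast
    ring

lemma sum_choose_half (k : ℕ) :
    ∑ z ∈ Finset.range (k+1), (2*k+2).choose z + (2*k+1).choose k = 2 * 4^k := by
  rw [Finset.sum_range_succ' (fun z => (2*k+2).choose z)]
  have e : ∀ i ∈ Finset.range k, (2*k+2).choose (i+1) = (2*k+1).choose i + (2*k+1).choose (i+1) := by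
    intro i _
    exact Nat.choose_succ_succ (2*k+1) i
  rw [Finset.sum_congr rfl e, Finset.sum_add_distrib]
  have h1 : ∑ i ∈ Finset.range k, (2*k+1).choose i + (2*k+1).choose k
      = ∑ i ∈ Finset.range (k+1), (2*k+1).choose i := (Finset.sum_range_succ _ k).symm
  have h2 : ∑ i ∈ Finset.range k, (2*k+1).choose (i+1) + (2*k+2).choose 0
      = ∑ i ∈ Finset.range (k+1), (2*k+1).choose i := by
    rw [Finset.sum_range_succ' (fun z => (2*k+1).choose z)]
    simp
  have h3 := Nat.sum_range_choose_halfway k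
  omega

lemma Ib_half (k : ℕ) : Ib (k : ℤ) (2*k+2) = 1/2 := by
  have hIb : Ib (k : ℤ) (2*k+2) =
      ∑ z ∈ Finset.range (k + 1), ((1 + (-1 : ℝ) ^ (k - z)) / 2 ^ (2*k+2)) * ((2*k+2).choose z) := by
    unfold Ib; norm_num
  rw [hIb]
  have e : ∀ z ∈ Finset.range (k+1),
      ((1 + (-1 : ℝ) ^ (k - z)) / 2 ^ (2*k+2)) * ((2*k+2).choose z)
      = (1/2^(2*k+2)) * ((2*k+2).choose z) + (1/2^(2*k+2)) * ((-1:ℝ)^(k+z) * ((2*k+2).choose z)) := by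
    intro z hz
    have hzk : z ≤ k := by simpa using Nat.lt_succ_iff.mp (Finset.mem_range.mp hz)
    have : (-1:ℝ)^(k-z) = (-1:ℝ)^(k+z) := by
      rw [show k+z = (k-z)+2*z from by omega, pow_add, pow_mul]
      norm_num
    rw [this]; ring
  rw [Finset.sum_congr rfl e, Finset.sum_add_distrib, ← Finset.mul_sum, ← Finset.mul_sum]
  rw [show 2*k+2 = (2*k+1)+1 from rfl] at *
  rw [alt_sum (2*k+1) k]
  have h4 := sum_choose_half k
  have hs : (∑ z ∈ Finset.range (k+1), ((2*k+1+1).choose z : ℝ)) = 2*4^k - (2*k+1).choose k := by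
    have : ((∑ z ∈ Finset.range (k+1), (2*k+1+1).choose z : ℕ) : ℝ) + ((2*k+1).choose k : ℝ) = 2*4^k := by
      rw [← Nat.cast_add]
      rw [show 2*k+1+1 = 2*k+2 from rfl, h4]
      push_cast; ring
    push_cast at this ⊢
    linarith
  rw [hs]
  have : (2:ℝ)^(2*k+1+1) = 2 * (4^k * 2) := by
    rw [pow_succ, pow_succ, pow_mul]; norm_num; ring
  rw [this]
  have h4pos : (0:ℝ) < 4^k := by positivity
  field_simp
  ring


lemma telescope_G (y m : ℕ) (hy : 1 ≤ y) :
    ∑ n ∈ Finset.range (m / (2 * y) + 1),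
      (2 * Ib ((m : ℤ) / 2 - (y : ℤ) * n) (2 * ((m : ℤ) / 2) + 2).toNat
       - 2 * Ib ((m : ℤ) / 2 - y - (y : ℤ) * n) (2 * ((m : ℤ) / 2) + 2).toNat) = 1 := by
  set E := (2 * ((m : ℤ) / 2) + 2).toNat with hE
  set f : ℕ → ℝ := fun n => 2 * Ib ((m : ℤ) / 2 - (y : ℤ) * n) E with hf
  have hterm : ∀ n ∈ Finset.range (m / (2 * y) + 1),
      (2 * Ib ((m : ℤ) / 2 - (y : ℤ) * n) E - 2 * Ib ((m : ℤ) / 2 - y - (y : ℤ) * n) E)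
      = f n - f (n + 1) := by
    intro n _
    have harg : (m : ℤ) / 2 - y - (y : ℤ) * n = (m : ℤ) / 2 - (y : ℤ) * (n + 1) := by push_cast; ring
    rw [harg]
    rfl
  rw [Finset.sum_congr rfl hterm, Finset.sum_range_sub' f]
  have hlast : f (m / (2 * y) + 1) = 0 := by
    have h2 : m < (m / (2 * y) + 1) * (2 * y) :=
      (Nat.div_lt_iff_lt_mul (by omega)).mp (Nat.lt_succ_self _)
    have hdiv : 2 * ((m : ℤ) / 2) ≤ (m : ℤ) := by omega
    simp only [hf]
    rw [Ib_neg_s15, mul_zero]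
    push_cast at h2 ⊢
    linarith
  rw [hlast]
  have hc : (m : ℤ) / 2 = ((m / 2 : ℕ) : ℤ) := by omega
  have hE2 : E = 2 * (m / 2) + 2 := by rw [hE]; omega
  rw [hf]
  simp only [Nat.cast_zero, mul_zero, sub_zero, hc, hE2, Ib_half]
  norm_num

lemma G_left (y m : ℕ) (hy : 1 ≤ y) : Gfun 0 y m = 1 := by
  unfold Gfun
  rw [if_neg (by omega)]
  have e : ∀ n ∈ Finset.range (m / (2 * (0 + y)) + 1),
      (2 * Ib (((m : ℤ) - (0:ℕ)) / 2 - ((0:ℕ) + (y:ℤ)) * n) (2 * (((m : ℤ) - (0:ℕ)) / 2) + (0:ℕ) + 2).toNat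
       - 2 * Ib (((m : ℤ) - (0:ℕ)) / 2 - y - ((0:ℕ) + (y:ℤ)) * n) (2 * (((m : ℤ) - (0:ℕ)) / 2) + (0:ℕ) + 2).toNat
       + 2 * Ib (((m : ℤ) - y) / 2 - ((0:ℕ) + (y:ℤ)) * n) (2 * (((m : ℤ) - y) / 2) + y + 2).toNat
       - 2 * Ib (((m : ℤ) - y) / 2 - (0:ℕ) - ((0:ℕ) + (y:ℤ)) * n) (2 * (((m : ℤ) - y) / 2) + y + 2).toNat)
      = (2 * Ib ((m : ℤ) / 2 - (y : ℤ) * n) (2 * ((m : ℤ) / 2) + 2).toNat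
       - 2 * Ib ((m : ℤ) / 2 - y - (y : ℤ) * n) (2 * ((m : ℤ) / 2) + 2).toNat) := by
    intro n _
    push_cast
    simp only [sub_zero, zero_add, add_zero]
    ring
  rw [Finset.sum_congr rfl e]
  rw [show m / (2 * (0 + y)) = m / (2 * y) from by rw [zero_add]]
  exact telescope_G y m hy

lemma G_right (x m : ℕ) (hx : 1 ≤ x) : Gfun x 0 m = 1 := by
  unfold Gfun
  rw [if_neg (by omega)]
  have e : ∀ n ∈ Finset.range (m / (2 * (x + 0)) + 1),
      (2 * Ib (((m : ℤ) - x) / 2 - ((x:ℤ) + (0:ℕ)) * n) (2 * (((m : ℤ) - x) / 2) + x + 2).toNat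
       - 2 * Ib (((m : ℤ) - x) / 2 - (0:ℕ) - ((x:ℤ) + (0:ℕ)) * n) (2 * (((m : ℤ) - x) / 2) + x + 2).toNat
       + 2 * Ib (((m : ℤ) - (0:ℕ)) / 2 - ((x:ℤ) + (0:ℕ)) * n) (2 * (((m : ℤ) - (0:ℕ)) / 2) + (0:ℕ) + 2).toNat
       - 2 * Ib (((m : ℤ) - (0:ℕ)) / 2 - x - ((x:ℤ) + (0:ℕ)) * n) (2 * (((m : ℤ) - (0:ℕ)) / 2) + (0:ℕ) + 2).toNat)
      = (2 * Ib ((m : ℤ) / 2 - (x : ℤ) * n) (2 * ((m : ℤ) / 2) + 2).toNat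
       - 2 * Ib ((m : ℤ) / 2 - x - (x : ℤ) * n) (2 * ((m : ℤ) / 2) + 2).toNat) := by
    intro n _
    push_cast
    simp only [sub_zero, zero_add, add_zero]
    ring
  rw [Finset.sum_congr rfl e]
  rw [show m / (2 * (x + 0)) = m / (2 * x) from by rw [add_zero]]
  exact telescope_G x m hx

lemma Ib_pair' (c a b : ℤ) (ha : 0 ≤ a) (hb : 0 ≤ b) :
    2 * Ib (c - a) (2*c + b + 2).toNat =
      Ib (c - a) (2*c + b + 1).toNat + Ib (c - a - 1) (2*c + b + 1).toNat := by
  rcases le_or_gt 0 c with hc | hc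
  · have h2 : (2*c + b + 2).toNat = (2*c + b + 1).toNat + 1 := by omega
    rw [h2, Ib_rec]; ring
  · rw [Ib_neg_s15 _ _ (by omega), Ib_neg_s15 _ _ (by omega), Ib_neg_s15 _ _ (by omega)]; ring

lemma key_term (cx cy : ℤ) (x y : ℕ) (a : ℤ) (ha : 0 ≤ a) :
    2 * Ib (cx - a) (2*cx + x + 3).toNat
      - 2 * Ib (cx - (y+1) - a) (2*cx + x + 3).toNat
      + 2 * Ib (cy - a) (2*cy + y + 3).toNat
      - 2 * Ib (cy - (x+1) - a) (2*cy + y + 3).toNat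
    = ((2 * Ib (cx - a) (2*cx + x + 2).toNat
        - 2 * Ib (cx - (y+2) - a) (2*cx + x + 2).toNat
        + 2 * Ib (cy - 1 - a) (2*cy + y + 2).toNat
        - 2 * Ib (cy - 1 - x - a) (2*cy + y + 2).toNat)
      + (2 * Ib (cx - 1 - a) (2*cx + x + 2).toNat
        - 2 * Ib (cx - 1 - y - a) (2*cx + x + 2).toNat
        + 2 * Ib (cy - a) (2*cy + y + 2).toNat
        - 2 * Ib (cy - (x+2) - a) (2*cy + y + 2).toNat)) / 2 := by
  have e3 : ∀ c : ℤ, ∀ w : ℕ, 2*c + w + 3 = 2*c + ((w:ℤ)+1) + 2 := by intro c w; ring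
  have e2 : ∀ c : ℤ, ∀ w : ℕ, 2*c + w + 2 = 2*c + ((w:ℤ)+1) + 1 := by intro c w; ring
  have p1 := Ib_pair' cx a ((x:ℤ)+1) ha (by positivity)
  have p2 := Ib_pair' cx ((y:ℤ)+1+a) ((x:ℤ)+1) (by positivity) (by positivity)
  have p3 := Ib_pair' cy a ((y:ℤ)+1) ha (by positivity)
  have p4 := Ib_pair' cy ((x:ℤ)+1+a) ((y:ℤ)+1) (by positivity) (by positivity)
  rw [show cx - ((y:ℤ)+1+a) = cx - (y+1) - a from by ring] at p2
  rw [show cx - ((y:ℤ)+1) - a - 1 = cx - (y+2) - a from by ring] at p2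
  rw [show cy - ((x:ℤ)+1+a) = cy - (x+1) - a from by ring] at p4
  rw [show cy - ((x:ℤ)+1) - a - 1 = cy - (x+2) - a from by ring] at p4
  rw [e3 cx x, e3 cy y, e2 cx x, e2 cy y]
  rw [p1, p2, p3, p4]
  rw [show cx - a - 1 = cx - 1 - a from by ring,
      show cx - ((y:ℤ)+1) - a = cx - 1 - y - a from by ring,
      show cy - a - 1 = cy - 1 - a from by ring,
      show cy - ((x:ℤ)+1) - a = cy - 1 - x - a from by ring]
  ring

noncomputable def Lterm (x y m n : ℕ) : ℝ :=
  2 * Ib (((m:ℤ)-x)/2 - ((x:ℤ)+y+2)*n) (2*(((m:ℤ)-x)/2) + x + 3).toNat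
  - 2 * Ib (((m:ℤ)-x)/2 - ((y:ℤ)+1) - ((x:ℤ)+y+2)*n) (2*(((m:ℤ)-x)/2) + x + 3).toNat
  + 2 * Ib (((m:ℤ)-y)/2 - ((x:ℤ)+y+2)*n) (2*(((m:ℤ)-y)/2) + y + 3).toNat
  - 2 * Ib (((m:ℤ)-y)/2 - ((x:ℤ)+1) - ((x:ℤ)+y+2)*n) (2*(((m:ℤ)-y)/2) + y + 3).toNat

noncomputable def R1term (x y m n : ℕ) : ℝ :=
  2 * Ib (((m:ℤ)-x)/2 - ((x:ℤ)+y+2)*n) (2*(((m:ℤ)-x)/2) + x + 2).toNat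
  - 2 * Ib (((m:ℤ)-x)/2 - ((y:ℤ)+2) - ((x:ℤ)+y+2)*n) (2*(((m:ℤ)-x)/2) + x + 2).toNat
  + 2 * Ib (((m:ℤ)-y)/2 - 1 - ((x:ℤ)+y+2)*n) (2*(((m:ℤ)-y)/2) + y + 2).toNat
  - 2 * Ib (((m:ℤ)-y)/2 - 1 - (x:ℤ) - ((x:ℤ)+y+2)*n) (2*(((m:ℤ)-y)/2) + y + 2).toNat

noncomputable def R2term (x y m n : ℕ) : ℝ :=
  2 * Ib (((m:ℤ)-x)/2 - 1 - ((x:ℤ)+y+2)*n) (2*(((m:ℤ)-x)/2) + x + 2).toNat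
  - 2 * Ib (((m:ℤ)-x)/2 - 1 - (y:ℤ) - ((x:ℤ)+y+2)*n) (2*(((m:ℤ)-x)/2) + x + 2).toNat
  + 2 * Ib (((m:ℤ)-y)/2 - ((x:ℤ)+y+2)*n) (2*(((m:ℤ)-y)/2) + y + 2).toNat
  - 2 * Ib (((m:ℤ)-y)/2 - ((x:ℤ)+2) - ((x:ℤ)+y+2)*n) (2*(((m:ℤ)-y)/2) + y + 2).toNat

lemma hLs (x y m : ℕ) : Gfun (x+1) (y+1) (m+1) =
    ∑ n ∈ Finset.range ((m+1) / (2*(x+y+2)) + 1), Lterm x y m n := by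
  unfold Gfun
  rw [if_neg (by omega)]
  rw [show (x+1)+(y+1) = x+y+2 from by ring]
  refine Finset.sum_congr rfl ?_
  intro n _
  unfold Lterm
  push_cast
  ring_nf

lemma hR1s (x y m : ℕ) : Gfun x (y+2) m =
    ∑ n ∈ Finset.range (m / (2*(x+y+2)) + 1), R1term x y m n := by
  unfold Gfun
  rw [if_neg (by omega)]
  rw [show x+(y+2) = x+y+2 from by ring]
  refine Finset.sum_congr rfl ?_
  intro n _
  rw [show ((m:ℤ) - ((y+2:ℕ):ℤ))/2 = ((m:ℤ) - y)/2 - 1 from by push_cast; omega]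
  unfold R1term
  push_cast
  ring_nf

lemma hR2s (x y m : ℕ) : Gfun (x+2) y m =
    ∑ n ∈ Finset.range (m / (2*(x+y+2)) + 1), R2term x y m n := by
  unfold Gfun
  rw [if_neg (by omega)]
  rw [show (x+2)+y = x+y+2 from by ring]
  refine Finset.sum_congr rfl ?_
  intro n _
  rw [show ((m:ℤ) - ((x+2:ℕ):ℤ))/2 = ((m:ℤ) - x)/2 - 1 from by push_cast; omega]
  unfold R2term
  push_cast
  ring_nf

lemma R1_vanish (x y m n : ℕ) (hn : m / (2*(x+y+2)) + 1 ≤ n) : R1term x y m n = 0 := by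
  have hm : m < n * (2*(x+y+2)) := (Nat.div_lt_iff_lt_mul (by omega)).mp (by omega)
  obtain ⟨t, ht, hmt⟩ : ∃ t : ℤ, ((x:ℤ)+y+2)*n = t ∧ (m:ℤ) < 2*t := by
    refine ⟨_, rfl, ?_⟩
    have : ((m:ℕ):ℤ) < (n:ℤ) * (2*((x:ℤ)+y+2)) := by exact_mod_cast hm
    linarith [this, (by ring : (n:ℤ) * (2*((x:ℤ)+y+2)) = 2*(((x:ℤ)+y+2)*n))]
  unfold R1term
  rw [ht]
  rw [Ib_neg_s15 _ _ (by omega), Ib_neg_s15 _ _ (by omega), Ib_neg_s15 _ _ (by omega), Ib_neg_s15 _ _ (by omega)]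
  ring

lemma R2_vanish (x y m n : ℕ) (hn : m / (2*(x+y+2)) + 1 ≤ n) : R2term x y m n = 0 := by
  have hm : m < n * (2*(x+y+2)) := (Nat.div_lt_iff_lt_mul (by omega)).mp (by omega)
  obtain ⟨t, ht, hmt⟩ : ∃ t : ℤ, ((x:ℤ)+y+2)*n = t ∧ (m:ℤ) < 2*t := by
    refine ⟨_, rfl, ?_⟩
    have : ((m:ℕ):ℤ) < (n:ℤ) * (2*((x:ℤ)+y+2)) := by exact_mod_cast hm
    linarith [this, (by ring : (n:ℤ) * (2*((x:ℤ)+y+2)) = 2*(((x:ℤ)+y+2)*n))]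
  unfold R2term
  rw [ht]
  rw [Ib_neg_s15 _ _ (by omega), Ib_neg_s15 _ _ (by omega), Ib_neg_s15 _ _ (by omega), Ib_neg_s15 _ _ (by omega)]
  ring

lemma G_rec (x y m : ℕ) :
    Gfun (x+1) (y+1) (m+1) = (Gfun x (y+2) m + Gfun (x+2) y m) / 2 := by
  rw [hLs, hR1s, hR2s]
  have hQR : m / (2*(x+y+2)) + 1 ≤ (m+1) / (2*(x+y+2)) + 1 :=
    Nat.succ_le_succ (Nat.div_le_div_right (Nat.le_succ m))
  have ext1 : ∑ n ∈ Finset.range (m / (2*(x+y+2)) + 1), R1term x y m n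
      = ∑ n ∈ Finset.range ((m+1) / (2*(x+y+2)) + 1), R1term x y m n := by
    refine Finset.sum_subset (Finset.range_subset_range.mpr hQR) ?_
    intro n _ hn
    refine R1_vanish x y m n ?_
    simp only [Finset.mem_range] at hn
    omega
  have ext2 : ∑ n ∈ Finset.range (m / (2*(x+y+2)) + 1), R2term x y m n
      = ∑ n ∈ Finset.range ((m+1) / (2*(x+y+2)) + 1), R2term x y m n := by
    refine Finset.sum_subset (Finset.range_subset_range.mpr hQR) ?_
    intro n _ hn
    refine R2_vanish x y m n ?_
    simp only [Finset.mem_range] at hn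
    omega
  rw [ext1, ext2, ← Finset.sum_add_distrib, Finset.sum_div]
  refine Finset.sum_congr rfl ?_
  intro n _
  have ha : (0:ℤ) ≤ ((x:ℤ)+y+2)*n := by positivity
  have := key_term (((m:ℤ)-x)/2) (((m:ℤ)-y)/2) x y (((x:ℤ)+y+2)*n) ha
  unfold Lterm R1term R2term
  exact this

theorem H_recurrence (n m : ℕ) (hn : 1 ≤ n) (hm : 1 ≤ m) (t : ℝ) (ht : |t| ≤ (n : ℝ) - 2) :
    Hfun n m t = (1 / 2) * (Hfun n (m - 1) (t - 2) + Hfun n (m - 1) (t + 2)) := by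
  obtain ⟨m', rfl⟩ : ∃ m'', m = m'' + 1 := ⟨m - 1, by omega⟩
  simp only [Nat.add_sub_cancel]
  have habs := abs_le.mp ht
  have h0t := abs_nonneg t
  have hn2 : 2 ≤ n := by
    have h2 : (2:ℝ) ≤ (n:ℝ) := by linarith
    exact_mod_cast h2
  have hnR : (2:ℝ) ≤ (n:ℝ) := by exact_mod_cast hn2
  have hfl : (⌊((n:ℝ)+t)/2⌋ : ℝ) ≤ ((n:ℝ)+t)/2 := Int.floor_le _
  have hfu : ((n:ℝ)+t)/2 < ⌊((n:ℝ)+t)/2⌋ + 1 := Int.lt_floor_add_one _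
  have hu1 : (1:ℝ) ≤ ((n:ℝ)+t)/2 := by linarith
  have hun : ((n:ℝ)+t)/2 ≤ (n:ℝ) - 1 := by linarith
  have hz1 : 1 ≤ ⌊((n:ℝ)+t)/2⌋ := Int.le_floor.mpr (by push_cast; linarith)
  have hzn : ⌊((n:ℝ)+t)/2⌋ ≤ (n:ℤ) - 1 := by
    have h5 : (⌊((n:ℝ)+t)/2⌋ : ℝ) ≤ (n:ℝ) - 1 := le_trans hfl hun
    exact_mod_cast h5
  obtain ⟨w, hwz⟩ : ∃ w:ℕ, ⌊((n:ℝ)+t)/2⌋ = (w:ℤ) := ⟨(⌊((n:ℝ)+t)/2⌋).toNat, by omega⟩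
  have hw1 : 1 ≤ w := by omega
  have hwn : w + 1 ≤ n := by omega
  have hwfl : ((w:ℕ):ℝ) ≤ ((n:ℝ)+t)/2 := by rw [hwz] at hfl; exact_mod_cast hfl
  have hwfu : ((n:ℝ)+t)/2 < (w:ℝ) + 1 := by rw [hwz] at hfu; exact_mod_cast hfu
  have claimL : Hfun n (m'+1) t =
      (1 - ((n:ℝ)+t)/2 + (w:ℝ)) * Gfun w (n-w) (m'+1)
      + (((n:ℝ)+t)/2 - (w:ℝ)) * Gfun (w+1) (n-w-1) (m'+1) := by
    unfold Hfun
    rw [if_neg (not_le.mpr (by linarith))]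
    rw [hwz]
    rw [show ((w:ℕ):ℤ).toNat = w from by omega]
    push_cast
    ring
  have claim1 : Hfun n m' (t - 2) =
      (1 - ((n:ℝ)+t)/2 + (w:ℝ)) * Gfun (w-1) (n-w+1) m'
      + (((n:ℝ)+t)/2 - (w:ℝ)) * Gfun w (n-w) m' := by
    rcases eq_or_lt_of_le hu1 with heq | hlt
    · have hweq : w = 1 := by
        have : ⌊((n:ℝ)+t)/2⌋ = 1 := by rw [← heq]; exact Int.floor_one
        omega
      have habs2 : (n:ℝ) ≤ |t - 2| := by
        have ht2 : t = 2 - (n:ℝ) := by linarith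
        rw [ht2, show (2:ℝ) - (n:ℝ) - 2 = -(n:ℝ) from by ring, abs_neg,
          abs_of_nonneg (by positivity)]
      unfold Hfun
      rw [if_pos habs2, hweq]
      rw [show (1:ℕ) - 1 = 0 from rfl, show n - 1 + 1 = n from by omega,
        G_left n m' (by omega)]
      rw [← heq]
      push_cast
      ring
    · have habs2 : |t - 2| < n := by
        rw [abs_lt]; constructor <;> [linarith; linarith]
      unfold Hfun
      rw [if_neg (not_le.mpr habs2)]
      rw [show ((n:ℝ) + (t - 2))/2 = ((n:ℝ)+t)/2 + ((-1:ℤ):ℝ) from by push_cast; ring]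
      rw [Int.floor_add_intCast, hwz]
      rw [show ((w:ℤ) + -1).toNat = w - 1 from by omega]
      rw [show w - 1 + 1 = w from by omega, show n - (w-1) - 1 = n - w from by omega,
        show n - (w-1) = n - w + 1 from by omega]
      push_cast
      ring
  have claim2 : Hfun n m' (t + 2) =
      (1 - ((n:ℝ)+t)/2 + (w:ℝ)) * Gfun (w+1) (n-w-1) m'
      + (((n:ℝ)+t)/2 - (w:ℝ)) * Gfun (w+2) (n-w-2) m' := by
    rcases eq_or_lt_of_le hun with heq | hlt
    · have hweq : w + 1 = n := by
        have h6 : ((n:ℝ) + t)/2 = (((n:ℤ) - 1 : ℤ) : ℝ) := by push_cast; linarith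
        have : ⌊((n:ℝ)+t)/2⌋ = (n:ℤ) - 1 := by rw [h6, Int.floor_intCast]
        omega
      have hwR : (w:ℝ) = (n:ℝ) - 1 := by
        have h10 : ((w:ℝ) + 1) = (n:ℝ) := by exact_mod_cast hweq
        linarith
      have habs2 : (n:ℝ) ≤ |t + 2| := by
        have ht2 : t = (n:ℝ) - 2 := by linarith
        rw [ht2, show (n:ℝ) - 2 + 2 = (n:ℝ) from by ring, abs_of_nonneg (by positivity)]
      unfold Hfun
      rw [if_pos habs2]
      rw [show w + 1 = n from hweq, show n - w - 1 = 0 from by omega,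
        G_right n m' (by omega)]
      rw [heq, hwR]
      ring
    · have habs2 : |t + 2| < n := by
        rw [abs_lt]; constructor <;> [linarith; linarith]
      unfold Hfun
      rw [if_neg (not_le.mpr habs2)]
      rw [show ((n:ℝ) + (t + 2))/2 = ((n:ℝ)+t)/2 + ((1:ℤ):ℝ) from by push_cast; ring]
      rw [Int.floor_add_intCast, hwz]
      rw [show ((w:ℤ) + 1).toNat = w + 1 from by omega]
      rw [show n - (w+1) - 1 = n - w - 2 from by omega,
        show n - (w+1) = n - w - 1 from by omega,
        show w + 1 + 1 = w + 2 from by omega]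
      push_cast
      ring
  have keyK1 : Gfun w (n-w) (m'+1) =
      (Gfun (w-1) (n-w+1) m' + Gfun (w+1) (n-w-1) m')/2 := by
    have h7 := G_rec (w-1) (n-w-1) m'
    rw [show w-1+1 = w from by omega, show (n-w-1)+1 = n-w from by omega,
      show (n-w-1)+2 = n-w+1 from by omega, show (w-1)+2 = w+1 from by omega] at h7
    exact h7
  have keyK2 : (((n:ℝ)+t)/2 - (w:ℝ)) * Gfun (w+1) (n-w-1) (m'+1) =
      (((n:ℝ)+t)/2 - (w:ℝ)) * ((Gfun w (n-w) m' + Gfun (w+2) (n-w-2) m')/2) := by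
    rcases le_or_gt (w+2) n with hle | hgt
    · have h8 := G_rec w (n-w-2) m'
      rw [show (n-w-2)+1 = n-w-1 from by omega, show (n-w-2)+2 = n-w from by omega] at h8
      rw [h8]
    · have hweq : w + 1 = n := by omega
      have hzero : ((n:ℝ)+t)/2 - (w:ℝ) = 0 := by
        have h10 : ((w:ℝ) + 1) = (n:ℝ) := by exact_mod_cast hweq
        have h9 : ((n:ℝ)+t)/2 ≤ (w:ℝ) := by linarith
        linarith
      rw [hzero]
      ring
  rw [claimL, claim1, claim2, keyK1, keyK2]
  ring
end
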